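/- One has Θ(x_n^ℓ) = y_n^ℓ − (−1)^{n(ℓ−1)} τ_n^ℓ y₁^{−ℓ} in ℂ[y₁^±,…,y_n^±]#_αG. -/

import Mathlib

/-!
Common setup for the twisted graded Hecke algebra associated to the homocyclic
group `G ≅ (ℤ/ℓℤ)^{n-1}` (Gan–Highfield, "Center of twisted graded Hecke
algebras for homocyclic groups").

All indices are 0-based: the paper's `x_i, g_i, t_i, τ_i` (for `i = 1, …, n`)
correspond to index `i - 1 : Fin n` here; subscripts are taken mod `n` via the
(wrap-around) addition of `Fin n`.
-/

noncomputable section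

namespace TGHA

/-- `ζ` raised to an exponent in `ZMod ℓ` (representative taken in `{0, …, ℓ-1}`). -/
def zp (ℓ : ℕ) (ζ : ℂ) (z : ZMod ℓ) : ℂ := ζ ^ z.val

/-- Given the vector `a` of diagonal exponents of a group element
`g = diag(ζ^{a 0}, …, ζ^{a (n-1)})`, `pS n ℓ a k` is the exponent `i_k` of `g_k` when
`g` is written as `g₁^{i₁} ⋯ g_{n-1}^{i_{n-1}}`, namely the partial sum `a 0 + ⋯ + a (k-1)`. -/
def pS (n ℓ : ℕ) [NeZero n] (a : Fin n → ZMod ℓ) (k : ℕ) : ZMod ℓ :=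
  ∑ m ∈ Finset.range k, a (Fin.ofNat n m)

/-- The 2-cocycle `α : G × G → ℂˣ`,
`α(g₁^{i₁}⋯g_{n-1}^{i_{n-1}}, g₁^{j₁}⋯g_{n-1}^{j_{n-1}}) = ζ^{-i₁j₂ - i₂j₃ - ⋯ - i_{n-2}j_{n-1}}`,
expressed in terms of the vectors of diagonal exponents of the two group elements. -/
def coc (n ℓ : ℕ) [NeZero n] (ζ : ℂ) (a b : Fin n → ZMod ℓ) : ℂ :=
  zp ℓ ζ (-∑ k ∈ Finset.Icc 1 (n - 2), pS n ℓ a k * pS n ℓ b (k + 1))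

/-- The homocyclic group `G`: diagonal matrices `g = diag(ζ^{a 0}, …, ζ^{a (n-1)})` in
`SL_n(ℂ)` with `g^ℓ = 1`, identified with their vectors `a` of exponents; the condition
`det g = 1` is `∑ i, a i = 0`. Written additively. -/
def Gsub (n ℓ : ℕ) : AddSubgroup (Fin n → ZMod ℓ) where
  carrier := {a | ∑ i, a i = 0}
  zero_mem' := by simp
  add_mem' := by
    intro a b ha hb
    simp only [Set.mem_setOf_eq] at *
    simp [Finset.sum_add_distrib, ha, hb]
  neg_mem' := by
    intro a ha
    simp only [Set.mem_setOf_eq] at *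
    simp [ha]

abbrev G (n ℓ : ℕ) := ↥(Gsub n ℓ)

/-- The vector of diagonal exponents of the generator `g_i`
(`g_i x_i = ζ x_i`, `g_i x_{i+1} = ζ⁻¹ x_{i+1}`, `g_i x_j = x_j` otherwise). -/
def gvec (n ℓ : ℕ) [NeZero n] (i : Fin n) : Fin n → ZMod ℓ :=
  Pi.single i 1 - Pi.single (i + 1) 1

lemma gvec_mem (n ℓ : ℕ) [NeZero n] (i : Fin n) : gvec n ℓ i ∈ Gsub n ℓ := by
  show ∑ j, gvec n ℓ i j = 0
  simp [gvec, Finset.sum_sub_distrib]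

/-- The generator `g_i` as an element of `G`. -/
def gelt (n ℓ : ℕ) [NeZero n] (i : Fin n) : G n ℓ := ⟨gvec n ℓ i, gvec_mem n ℓ i⟩

/-- The defining relations of the twisted graded Hecke algebra `H`, as a quotient of the
free algebra on generators `x_i` (`Sum.inl i`) and `u_g`, `g ∈ G` (`Sum.inr g`): the
relations `u_g u_h = α(g,h) u_{gh}`, `u_1 = 1`, `u_g x_i = ζ^{a_i} x_i u_g` present the
crossed product `TV #_α G`, and the last two relations are the Hecke relations
`x_i x_{i+1} - x_{i+1} x_i = t_i g_i` and `x_i x_j = x_j x_i` for `|i - j| ∉ {1, n-1}`. -/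
inductive Rel (n ℓ : ℕ) [NeZero n] (ζ : ℂ) (t : Fin n → ℂ) :
    FreeAlgebra ℂ (Fin n ⊕ G n ℓ) → FreeAlgebra ℂ (Fin n ⊕ G n ℓ) → Prop
  | grp (g h : G n ℓ) :
      Rel n ℓ ζ t (FreeAlgebra.ι ℂ (Sum.inr g) * FreeAlgebra.ι ℂ (Sum.inr h))
        (coc n ℓ ζ g.1 h.1 • FreeAlgebra.ι ℂ (Sum.inr (g + h)))
  | one : Rel n ℓ ζ t (FreeAlgebra.ι ℂ (Sum.inr (0 : G n ℓ))) 1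
  | gx (g : G n ℓ) (i : Fin n) :
      Rel n ℓ ζ t (FreeAlgebra.ι ℂ (Sum.inr g) * FreeAlgebra.ι ℂ (Sum.inl i))
        (zp ℓ ζ (g.1 i) • (FreeAlgebra.ι ℂ (Sum.inl i) * FreeAlgebra.ι ℂ (Sum.inr g)))
  | hecke (i : Fin n) :
      Rel n ℓ ζ t
        (FreeAlgebra.ι ℂ (Sum.inl i) * FreeAlgebra.ι ℂ (Sum.inl (i + 1)) -
          FreeAlgebra.ι ℂ (Sum.inl (i + 1)) * FreeAlgebra.ι ℂ (Sum.inl i))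
        (t i • FreeAlgebra.ι ℂ (Sum.inr (gelt n ℓ i)))
  | commx (i j : Fin n) (h₁ : j ≠ i + 1) (h₂ : i ≠ j + 1) :
      Rel n ℓ ζ t (FreeAlgebra.ι ℂ (Sum.inl i) * FreeAlgebra.ι ℂ (Sum.inl j))
        (FreeAlgebra.ι ℂ (Sum.inl j) * FreeAlgebra.ι ℂ (Sum.inl i))

/-- The twisted graded Hecke algebra `H`. -/
abbrev H (n ℓ : ℕ) [NeZero n] (ζ : ℂ) (t : Fin n → ℂ) := RingQuot (Rel n ℓ ζ t)

/-- The image of `x_i` in `H`. -/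
def xx (n ℓ : ℕ) [NeZero n] (ζ : ℂ) (t : Fin n → ℂ) (i : Fin n) : H n ℓ ζ t :=
  RingQuot.mkAlgHom ℂ (Rel n ℓ ζ t) (FreeAlgebra.ι ℂ (Sum.inl i))

/-- The image of `g ∈ G` in `H`. -/
def ug (n ℓ : ℕ) [NeZero n] (ζ : ℂ) (t : Fin n → ℂ) (g : G n ℓ) : H n ℓ ζ t :=
  RingQuot.mkAlgHom ℂ (Rel n ℓ ζ t) (FreeAlgebra.ι ℂ (Sum.inr g))

/-- Index set for the basis `y^p u_g` of the crossed product `ℂ[y₁^±,…,y_n^±] #_α G`. -/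
abbrev M (n ℓ : ℕ) := (Fin n → ℤ) × G n ℓ

/-- `χ(g, p)`: the scalar by which `g = diag(ζ^{a 0}, …)` acts on the Laurent monomial `y^p`;
for `g = g_i` it is `ζ^{p_i - p_{i+1}}`. -/
def chi (n ℓ : ℕ) [NeZero n] (ζ : ℂ) (a : Fin n → ZMod ℓ) (p : Fin n → ℤ) : ℂ :=
  zp ℓ ζ (∑ j, a j * (p j : ZMod ℓ))

/-- Structure constants of the crossed product `ℂ[y₁^±,…,y_n^±] #_α G` with respect to its
basis: `(y^p u_g) (y^q u_h) = α(g,h) χ(g,q) y^{p+q} u_{gh}`. -/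
def sigma (n ℓ : ℕ) [NeZero n] (ζ : ℂ) (a b : M n ℓ) : ℂ :=
  coc n ℓ ζ a.2.1 b.2.1 * chi n ℓ ζ a.2.1 b.1

/-- The basis element `y^p u_g` (`a = (p, g)`) of the crossed product
`ℂ[y₁^±,…,y_n^±] #_α G`, realized faithfully as the operator of left multiplication by it
on the underlying vector space of the crossed product. -/
def Top (n ℓ : ℕ) [NeZero n] (ζ : ℂ) (a : M n ℓ) : Module.End ℂ (M n ℓ →₀ ℂ) :=
  Finsupp.lsum ℂ fun b => sigma n ℓ ζ a b • Finsupp.lsingle (a + b)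

/-- The algebra containing (the left regular realization of) the crossed product
`ℂ[y₁^±,…,y_n^±] #_α G`. -/
abbrev A (n ℓ : ℕ) := Module.End ℂ (M n ℓ →₀ ℂ)

/-- The element `u_g`, `g ∈ G`, of the crossed product. -/
def Uy (n ℓ : ℕ) [NeZero n] (ζ : ℂ) (g : G n ℓ) : A n ℓ := Top n ℓ ζ (0, g)

/-- The element `y_i` of the crossed product. -/
def Ygen (n ℓ : ℕ) [NeZero n] (ζ : ℂ) (i : Fin n) : A n ℓ := Top n ℓ ζ (Pi.single i 1, 0)

/-- The element `y_i⁻¹` of the crossed product. -/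
def Yinv (n ℓ : ℕ) [NeZero n] (ζ : ℂ) (i : Fin n) : A n ℓ := Top n ℓ ζ (-Pi.single i 1, 0)

/-- `τ_i = t_i/(ζ-1)` for `i = 1, …, n-1` and `τ_n = ζ t_n/(ζ - 1)`. -/
def tau (n : ℕ) (ζ : ℂ) (t : Fin n → ℂ) (i : Fin n) : ℂ :=
  if (i : ℕ) = n - 1 then ζ * t i / (ζ - 1) else t i / (ζ - 1)

/-- `τ̃_i = τ_i^ℓ` for `i = 1, …, n-1` and `τ̃_n = (-1)^{n(ℓ-1)} τ_n^ℓ`. -/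
def taut (n ℓ : ℕ) (ζ : ℂ) (t : Fin n → ℂ) (i : Fin n) : ℂ :=
  if (i : ℕ) = n - 1 then (-1) ^ (n * (ℓ - 1)) * tau n ζ t i ^ ℓ else tau n ζ t i ^ ℓ

/-- The index set `J`: subsets `{i₁ < ⋯ < i_k}` of `{1, …, n}` with
`|i_r - i_s| ∉ {1, n-1}`, i.e. containing no pair of (cyclically) adjacent indices. -/
def Jset (n : ℕ) [NeZero n] : Finset (Finset (Fin n)) :=
  Finset.univ.filter fun S => ∀ i ∈ S, ∀ j ∈ S, j ≠ i + 1

/-- The exponent vector `δ - ε_{i₁} - ⋯ - ε_{i_k}` for `S = {i₁, …, i_k} ∈ J`: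
the entry at `j` is `0` if some `ε_i`, `i ∈ S`, covers position `j` (i.e. `j ∈ S` or
`j - 1 ∈ S` cyclically) and `1` otherwise. -/
def expS (n : ℕ) [NeZero n] (S : Finset (Fin n)) (j : Fin n) : ℕ :=
  if j ∈ S ∨ j - 1 ∈ S then 0 else 1

/-- The ordered monomial `x₁^{p₁} ⋯ x_n^{p_n} ∈ H`. -/
def xpow (n ℓ : ℕ) [NeZero n] (ζ : ℂ) (t : Fin n → ℂ) (p : Fin n → ℕ) : H n ℓ ζ t :=
  ((List.finRange n).map fun j => xx n ℓ ζ t j ^ p j).prod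

/-- The product `g_{i₁} * ⋯ * g_{i_k} ∈ H` over `S = {i₁ < ⋯ < i_k}` (in increasing
order); since `u_g u_h = α(g,h) u_{gh}` holds in `H`, this is the `*`-product. -/
def gprodS (n ℓ : ℕ) [NeZero n] (ζ : ℂ) (t : Fin n → ℂ) (S : Finset (Fin n)) :
    H n ℓ ζ t :=
  ((S.sort (· ≤ ·)).map fun i => ug n ℓ ζ t (gelt n ℓ i)).prod

/-- The element `w = Σ_{{i₁<⋯<i_k} ∈ J} τ_{i₁} ⋯ τ_{i_k} x^{δ-ε_{i₁}-⋯-ε_{i_k}}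
g_{i₁} * ⋯ * g_{i_k}` of `H`. -/
def w (n ℓ : ℕ) [NeZero n] (ζ : ℂ) (t : Fin n → ℂ) : H n ℓ ζ t :=
  ∑ S ∈ Jset n, (∏ i ∈ S, tau n ζ t i) • (xpow n ℓ ζ t (expS n S) * gprodS n ℓ ζ t S)

/-- `ν_r = (-1)^r (ℓ/(ℓ-r)) C(ℓ-r, r)`. -/
def nu (ℓ r : ℕ) : ℂ := (-1) ^ r * ((ℓ : ℂ) / ((ℓ : ℂ) - (r : ℂ))) * (Nat.choose (ℓ - r) r : ℂ)

/-- The polynomial `F` in the variables `a_i = X (Sum.inl i)` and `b = X (Sum.inr ())`. -/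
def Fpoly (n ℓ : ℕ) [NeZero n] (ζ : ℂ) (t : Fin n → ℂ) : MvPolynomial (Fin n ⊕ Unit) ℂ :=
  (∑ S ∈ Jset n, (∏ i ∈ S, taut n ℓ ζ t i) •
      ∏ j : Fin n, MvPolynomial.X (Sum.inl j) ^ expS n S j) -
    ∑ r ∈ Finset.range (ℓ / 2 + 1),
      ((-1) ^ (n * r) * ζ ^ ((n - 2) * r) * nu ℓ r * (∏ i : Fin n, tau n ζ t i) ^ r) •
        MvPolynomial.X (Sum.inr ()) ^ (ℓ - 2 * r)

end TGHA

/-!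
Write `Θ(x_n) = y_n + b` with `b = -τ_n y₁⁻¹ g_n`. Since `g_n` scales `y_n` by `ζ`, we have
`b y_n = ζ y_n b`. For a unit `a` and any `b` with `b a = ζ a b`, putting `d = a⁻¹ b` gives
`(a + b)^ℓ = a^ℓ ∏_{i<ℓ} (1 + ζ^i d) = a^ℓ (1 - (-d)^ℓ)`, because `ζ` is a primitive `ℓ`-th
root of unity, and `b^ℓ = ζ^{ℓ(ℓ-1)/2} a^ℓ d^ℓ = (-1)^{ℓ-1} a^ℓ d^ℓ`; so
`(a + b)^ℓ = a^ℓ + b^ℓ`. Finally, the cocycle gives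
`(y₁⁻¹ g_n)^ℓ = ζ^{(3-n) ℓ(ℓ-1)/2} y₁^{-ℓ} = (-1)^{(n-3)(ℓ-1)} y₁^{-ℓ}`.
-/

section QCommuting

open Polynomial

variable {K R : Type*} [CommRing K] [IsDomain K] {ζ : K} {ℓ : ℕ}

theorem IsPrimitiveRoot.prod_range_one_add_pow_mul (hζ : IsPrimitiveRoot ζ ℓ) (hℓ : 0 < ℓ)
    (z : K) : ∏ i ∈ Finset.range ℓ, (1 + ζ ^ i * z) = 1 - (-z) ^ ℓ := by
  have h := congrArg (eval 1) (X_pow_sub_C_eq_prod hζ hℓ (rfl : (-z) ^ ℓ = (-z) ^ ℓ))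
  simpa [eval_prod] using h.symm

theorem IsPrimitiveRoot.pow_sum_range (hζ : IsPrimitiveRoot ζ ℓ) :
    ζ ^ (∑ i ∈ Finset.range ℓ, i) = (-1) ^ (ℓ - 1) := by
  have hsum := Finset.sum_range_id_mul_two ℓ
  rcases Nat.even_or_odd' ℓ with ⟨m, rfl | rfl⟩
  · rcases Nat.eq_zero_or_pos m with rfl | hm
    · simp
    have hsum' : ∑ i ∈ Finset.range (2 * m), i = m * (2 * m - 1) :=
      Nat.eq_of_mul_eq_mul_right two_pos (by rw [hsum]; ring)
    rw [hsum', pow_mul, (hζ.pow (by omega) (mul_comm 2 m)).eq_neg_one_of_two_right]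
  · have hsum' : ∑ i ∈ Finset.range (2 * m + 1), i = (2 * m + 1) * m :=
      Nat.eq_of_mul_eq_mul_right two_pos (by rw [hsum, Nat.add_sub_cancel]; ring)
    rw [hsum', pow_mul, hζ.pow_eq_one, one_pow, Nat.add_sub_cancel, pow_mul, neg_one_sq, one_pow]

variable [Ring R] [Algebra K R]

theorem add_pow_eq_pow_add_pow_of_mul_eq_smul_mul (hζ : IsPrimitiveRoot ζ ℓ) (hℓ : 0 < ℓ)
    {a b : R} (ha : IsUnit a) (hba : b * a = ζ • (a * b)) : (a + b) ^ ℓ = a ^ ℓ + b ^ ℓ := by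
  obtain ⟨u, rfl⟩ := ha
  set d : R := ↑u⁻¹ * b with hd
  have hb : b = u * d := by rw [hd, Units.mul_inv_cancel_left]
  have hdu : d * u = ζ • (u * d) := by
    rw [hd, mul_assoc, hba, mul_smul_comm, Units.inv_mul_cancel_left, Units.mul_inv_cancel_left]
  have hdu_pow (m : ℕ) : d * u ^ m = ζ ^ m • (u ^ m * d) := by
    induction m with
    | zero => simp
    | succ m ih =>
      rw [pow_succ', ← mul_assoc, hdu, smul_mul_assoc, mul_assoc, ih, mul_smul_comm, smul_smul,
        ← mul_assoc, ← pow_succ', pow_succ]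
  have hpow (m : ℕ) : ((u : R) + b) ^ m =
      u ^ m * aeval d (∏ i ∈ Finset.range m, (1 + C (ζ ^ i) * X)) := by
    induction m with
    | zero => simp
    | succ m ih =>
      rw [pow_succ', ih, Finset.prod_range_succ, mul_comm, map_mul, hb]
      simp only [map_add, map_one, map_mul, aeval_C, aeval_X, Algebra.algebraMap_eq_smul_one]
      rw [← mul_assoc, add_mul, mul_assoc (u : R) d, hdu_pow]
      simp only [smul_mul_assoc, one_mul, mul_smul_comm, pow_succ']
      noncomm_ring
  have hmul_pow (m : ℕ) :
      ((u : R) * d) ^ m = ζ ^ (∑ i ∈ Finset.range m, i) • (u ^ m * d ^ m) := by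
    induction m with
    | zero => simp
    | succ m ih =>
      rw [pow_succ', ih, mul_smul_comm, mul_assoc, ← mul_assoc d, hdu_pow, smul_mul_assoc,
        mul_smul_comm, smul_smul, Finset.sum_range_succ, pow_add]
      simp only [mul_assoc, pow_succ']
  have hprod : ∏ i ∈ Finset.range ℓ, (1 + C (ζ ^ i) * X) = 1 - C ((-1) ^ ℓ) * X ^ ℓ := by
    simpa [map_pow, neg_pow (X : K[X])] using
      (hζ.map_of_injective C_injective).prod_range_one_add_pow_mul hℓ X
  rw [hpow, hprod, hb, hmul_pow, hζ.pow_sum_range]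
  simp only [map_sub, map_one, map_mul, aeval_C, aeval_X_pow, ← Algebra.smul_def, mul_sub,
    mul_one, mul_smul_comm]
  obtain ⟨k, rfl⟩ : ∃ k, ℓ = k + 1 := ⟨ℓ - 1, by omega⟩
  rw [pow_succ (-1 : K), mul_neg_one, neg_smul, sub_neg_eq_add, Nat.add_sub_cancel]

end QCommuting

theorem neg_pow_mul_neg_one_pow {K : Type*} [CommRing K] {n ℓ : ℕ} (hn : 3 ≤ n) (hℓ : 1 ≤ ℓ)
    (x : K) :
    (-x) ^ ℓ * (-1) ^ ((ℓ - 1) * (n - 3)) = -((-1) ^ (n * (ℓ - 1)) * x ^ ℓ) := by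
  obtain ⟨m, rfl⟩ : ∃ m, n = m + 3 := ⟨n - 3, by omega⟩
  obtain ⟨k, rfl⟩ : ∃ k, ℓ = k + 1 := ⟨ℓ - 1, by omega⟩
  rw [Nat.add_sub_cancel, Nat.add_sub_cancel, show (m + 3) * k = k * m + k + 2 * k by ring,
    pow_add, pow_add, pow_mul (-1 : K) 2, neg_one_sq, one_pow, neg_pow]
  ring

namespace TGHA

lemma nsmul_char_mk {n ℓ : ℕ} (p : Fin n → ℤ) (g : G n ℓ) :
    ℓ • ((p, g) : M n ℓ) = (ℓ • p, 0) :=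
  Prod.ext rfl (Subtype.ext (funext fun j => by simp))

variable {n ℓ : ℕ} [NeZero n] {ζ : ℂ}

lemma zp_zero : zp ℓ ζ 0 = 1 := by simp [zp]

lemma zp_add [NeZero ℓ] (h : ζ ^ ℓ = 1) (z w : ZMod ℓ) :
    zp ℓ ζ (z + w) = zp ℓ ζ z * zp ℓ ζ w := by
  rw [zp, zp, zp, ZMod.val_add, ← pow_eq_pow_mod _ h, pow_add]

lemma zp_nsmul [NeZero ℓ] (h : ζ ^ ℓ = 1) (k : ℕ) (z : ZMod ℓ) :
    zp ℓ ζ (k • z) = zp ℓ ζ z ^ k := by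
  induction k with
  | zero => simp [zp_zero]
  | succ k ih => rw [succ_nsmul, zp_add h, ih, pow_succ]

lemma zp_natCast (h : ζ ^ ℓ = 1) (m : ℕ) : zp ℓ ζ m = ζ ^ m := by
  rw [zp, ZMod.val_natCast, ← pow_eq_pow_mod _ h]

lemma zp_one [NeZero ℓ] (h : ζ ^ ℓ = 1) : zp ℓ ζ 1 = ζ := by
  simpa using zp_natCast h 1

lemma zp_neg_natCast [NeZero ℓ] (h : ζ ^ ℓ = 1) (m : ℕ) : zp ℓ ζ (-m) = (ζ ^ m)⁻¹ := by
  refine eq_inv_of_mul_eq_one_left ?_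
  rw [← zp_natCast h, ← zp_add h, neg_add_cancel, zp_zero]

lemma zp_pow (z : ZMod ℓ) (N : ℕ) : zp ℓ ζ z ^ N = zp ℓ (ζ ^ N) z := by
  simp only [zp, ← pow_mul, mul_comm]

lemma zp_neg_natCast_pow_sum_range [NeZero ℓ] (hζ : IsPrimitiveRoot ζ ℓ) (m : ℕ) :
    zp ℓ ζ (-m) ^ (∑ i ∈ Finset.range ℓ, i) = (-1) ^ ((ℓ - 1) * m) := by
  have h : ((-1 : ℂ) ^ (ℓ - 1)) ^ ℓ = 1 := by
    rw [← hζ.pow_sum_range, ← pow_mul, mul_comm, pow_mul, hζ.pow_eq_one, one_pow]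
  rw [zp_pow, hζ.pow_sum_range, zp_neg_natCast h, ← pow_mul, ← inv_pow, inv_neg_one]

lemma pS_add (a b : Fin n → ZMod ℓ) (k : ℕ) : pS n ℓ (a + b) k = pS n ℓ a k + pS n ℓ b k := by
  simp [pS, Finset.sum_add_distrib]

def sigmaExp (a b : M n ℓ) : ZMod ℓ :=
  -(∑ k ∈ Finset.Icc 1 (n - 2), pS n ℓ a.2.1 k * pS n ℓ b.2.1 (k + 1)) +
    ∑ j, a.2.1 j * (b.1 j : ZMod ℓ)

lemma sigma_eq_zp [NeZero ℓ] (h : ζ ^ ℓ = 1) (a b : M n ℓ) :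
    sigma n ℓ ζ a b = zp ℓ ζ (sigmaExp a b) := by
  rw [sigmaExp, zp_add h, sigma, coc, chi]

lemma sigmaExp_add_left (a b c : M n ℓ) :
    sigmaExp (a + b) c = sigmaExp a c + sigmaExp b c := by
  simp only [sigmaExp, Prod.snd_add, AddSubgroup.coe_add, pS_add, Pi.add_apply, add_mul,
    Finset.sum_add_distrib]
  ring

lemma sigmaExp_add_right (a b c : M n ℓ) :
    sigmaExp a (b + c) = sigmaExp a b + sigmaExp a c := by
  simp only [sigmaExp, Prod.fst_add, Prod.snd_add, AddSubgroup.coe_add, pS_add, Pi.add_apply,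
    Int.cast_add, mul_add, Finset.sum_add_distrib]
  ring

lemma sigmaExp_nsmul_right (a b : M n ℓ) (k : ℕ) : sigmaExp a (k • b) = k • sigmaExp a b := by
  induction k with
  | zero => simp [sigmaExp, pS]
  | succ k ih => rw [succ_nsmul, succ_nsmul, sigmaExp_add_right, ih]

lemma sigmaExp_of_snd_eq_zero {a : M n ℓ} (ha : a.2 = 0) (b : M n ℓ) : sigmaExp a b = 0 := by
  simp [sigmaExp, ha, pS]

lemma Top_single (a b : M n ℓ) (c : ℂ) :
    Top n ℓ ζ a (Finsupp.single b c) = sigma n ℓ ζ a b • Finsupp.single (a + b) c := by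
  simp [Top]

-- Associativity: `sigmaExp` is biadditive, so `sigma` is a 2-cocycle.
lemma Top_mul [NeZero ℓ] (h : ζ ^ ℓ = 1) (a b : M n ℓ) :
    Top n ℓ ζ a * Top n ℓ ζ b = sigma n ℓ ζ a b • Top n ℓ ζ (a + b) := by
  refine Finsupp.lhom_ext fun c x => ?_
  simp only [Module.End.mul_apply, Top_single, map_smul, LinearMap.smul_apply, smul_smul,
    add_assoc, sigma_eq_zp h, ← zp_add h, sigmaExp_add_left, sigmaExp_add_right]
  congr 2
  ring

lemma Top_zero [NeZero ℓ] (h : ζ ^ ℓ = 1) : Top n ℓ ζ 0 = 1 := by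
  refine Finsupp.lhom_ext fun c x => ?_
  rw [Top_single, sigma_eq_zp h, sigmaExp_of_snd_eq_zero rfl, zp_zero, one_smul, zero_add,
    Module.End.one_apply]

lemma Top_pow [NeZero ℓ] (h : ζ ^ ℓ = 1) (a : M n ℓ) (m : ℕ) :
    Top n ℓ ζ a ^ m = zp ℓ ζ (sigmaExp a a) ^ (∑ i ∈ Finset.range m, i) • Top n ℓ ζ (m • a) := by
  induction m with
  | zero => simp [Top_zero h]
  | succ m ih =>
    rw [pow_succ', ih, mul_smul_comm, Top_mul h, sigma_eq_zp h, sigmaExp_nsmul_right,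
      zp_nsmul h, smul_smul, Finset.sum_range_succ, pow_add, mul_comm, ← succ_nsmul']

lemma Top_mul_of_snd_eq_zero [NeZero ℓ] (h : ζ ^ ℓ = 1) {a : M n ℓ} (ha : a.2 = 0)
    (b : M n ℓ) :
    Top n ℓ ζ a * Top n ℓ ζ b = Top n ℓ ζ (a + b) := by
  rw [Top_mul h, sigma_eq_zp h, sigmaExp_of_snd_eq_zero ha, zp_zero, one_smul]

lemma Top_pow_of_snd_eq_zero [NeZero ℓ] (h : ζ ^ ℓ = 1) {a : M n ℓ} (ha : a.2 = 0) (m : ℕ) :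
    Top n ℓ ζ a ^ m = Top n ℓ ζ (m • a) := by
  rw [Top_pow h, sigmaExp_of_snd_eq_zero ha, zp_zero, one_pow, one_smul]

lemma Yinv_mul_Uy [NeZero ℓ] (h : ζ ^ ℓ = 1) (i : Fin n) (g : G n ℓ) :
    Yinv n ℓ ζ i * Uy n ℓ ζ g = Top n ℓ ζ (-Pi.single i 1, g) := by
  rw [Yinv, Uy, Top_mul_of_snd_eq_zero h rfl, Prod.mk_add_mk, add_zero, zero_add]

lemma isUnit_Top_of_snd_eq_zero [NeZero ℓ] (h : ζ ^ ℓ = 1) {a : M n ℓ} (ha : a.2 = 0) :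
    IsUnit (Top n ℓ ζ a) :=
  ⟨⟨Top n ℓ ζ a, Top n ℓ ζ (-a),
    by rw [Top_mul_of_snd_eq_zero h ha, add_neg_cancel, Top_zero h],
    by rw [Top_mul_of_snd_eq_zero h (by simp [ha]), neg_add_cancel, Top_zero h]⟩, rfl⟩

lemma isUnit_Ygen [NeZero ℓ] (h : ζ ^ ℓ = 1) (i : Fin n) : IsUnit (Ygen n ℓ ζ i) :=
  isUnit_Top_of_snd_eq_zero h rfl

lemma neg_one_ne_zero_of_two_le (hn : 2 ≤ n) : (-1 : Fin n) ≠ 0 := by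
  rw [Ne, neg_eq_zero, Fin.ext_iff]
  simp [Nat.mod_eq_of_lt (show 1 < n by omega)]

open Fin.NatCast in
lemma pS_gvec_neg_one {k : ℕ} (hk₀ : 1 ≤ k) (hk : k < n) :
    pS n ℓ (gvec n ℓ (-1)) k = -1 := by
  rw [pS, Finset.sum_eq_single 0]
  · simp [gvec, (neg_one_ne_zero_of_two_le (n := n) (by omega)).symm]
  · intro m hm hm0
    have hm : m + 1 < n := by have := Finset.mem_range.mp hm; omega
    have h0 : (m : Fin n) ≠ 0 := by
      rw [Ne, Fin.natCast_eq_zero]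
      exact fun h => hm0 (Nat.eq_zero_of_dvd_of_lt h (by omega))
    have h1 : (m : Fin n) ≠ -1 := by
      rw [Ne, eq_neg_iff_add_eq_zero, ← Nat.cast_add_one, Fin.natCast_eq_zero]
      exact fun h => absurd (Nat.eq_zero_of_dvd_of_lt h hm) (Nat.succ_ne_zero m)
    simp [gvec, h0, h1]
  · exact fun h => absurd (Finset.mem_range.mpr (by omega)) h

lemma sum_pS_gvec_neg_one_mul (hn : 3 ≤ n) :
    ∑ k ∈ Finset.Icc 1 (n - 2), pS n ℓ (gvec n ℓ (-1)) k * pS n ℓ (gvec n ℓ (-1)) (k + 1) =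
      ((n - 2 : ℕ) : ZMod ℓ) := by
  have hterm : ∀ k ∈ Finset.Icc 1 (n - 2),
      pS n ℓ (gvec n ℓ (-1)) k * pS n ℓ (gvec n ℓ (-1)) (k + 1) = 1 := by
    intro k hk
    rw [Finset.mem_Icc] at hk
    rw [pS_gvec_neg_one hk.1 (by omega), pS_gvec_neg_one (by omega) (by omega), neg_mul_neg,
      one_mul]
  rw [Finset.sum_congr rfl hterm]
  simp

lemma sigmaExp_gelt_neg_one_neg_single_zero (hn : 3 ≤ n) (p : Fin n → ℤ) :
    sigmaExp ((p, gelt n ℓ (-1)) : M n ℓ) (-Pi.single 0 1, gelt n ℓ (-1)) =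
      -((n - 3 : ℕ) : ZMod ℓ) := by
  rw [sigmaExp]
  dsimp only [gelt]
  rw [sum_pS_gvec_neg_one_mul hn, show n - 2 = n - 3 + 1 by omega]
  simp [gvec, Pi.single_apply, show n ≠ 1 by omega]

lemma sigmaExp_gelt_neg_one_single_neg_one (hn : 3 ≤ n) (p : Fin n → ℤ) :
    sigmaExp ((p, gelt n ℓ (-1)) : M n ℓ) (Pi.single (-1) 1, 0) = 1 := by
  simp [sigmaExp, gelt, gvec, pS, Pi.single_apply, neg_one_ne_zero_of_two_le (n := n) (by omega)]

lemma Top_gelt_neg_one_mul_Ygen [NeZero ℓ] (h : ζ ^ ℓ = 1) (hn : 3 ≤ n) (p : Fin n → ℤ) :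
    Top n ℓ ζ (p, gelt n ℓ (-1)) * Ygen n ℓ ζ (-1) =
      ζ • (Ygen n ℓ ζ (-1) * Top n ℓ ζ (p, gelt n ℓ (-1))) := by
  rw [Ygen, Top_mul h, sigma_eq_zp h, sigmaExp_gelt_neg_one_single_neg_one hn, zp_one h,
    Top_mul_of_snd_eq_zero h rfl, add_comm]

end TGHA

open TGHA in
theorem statement6_general (n ℓ : ℕ) [NeZero n] (hn : 3 ≤ n) (hℓ : 2 ≤ ℓ)
    (ζ : ℂ) (hζ : IsPrimitiveRoot ζ ℓ) (t : Fin n → ℂ)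
    (Θ : H n ℓ ζ t →ₐ[ℂ] A n ℓ)
    (hΘx : ∀ i : Fin n,
      Θ (xx n ℓ ζ t i) =
        Ygen n ℓ ζ i -
          (ζ * t i / (ζ - 1)) • (Yinv n ℓ ζ (i + 1) * Uy n ℓ ζ (gelt n ℓ i))) :
    Θ (xx n ℓ ζ t (-1) ^ ℓ) =
      Ygen n ℓ ζ (-1) ^ ℓ -
        ((-1 : ℂ) ^ (n * (ℓ - 1)) * (ζ * t (-1) / (ζ - 1)) ^ ℓ) • Yinv n ℓ ζ 0 ^ ℓ := by
  have : NeZero ℓ := ⟨by omega⟩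
  have h1 := hζ.pow_eq_one
  set τ := ζ * t (-1) / (ζ - 1)
  set c : M n ℓ := (-Pi.single 0 1, gelt n ℓ (-1))
  have hx : Θ (xx n ℓ ζ t (-1)) = Ygen n ℓ ζ (-1) + (-τ) • Top n ℓ ζ c := by
    rw [hΘx, neg_add_cancel, Yinv_mul_Uy h1, sub_eq_add_neg (Ygen n ℓ ζ (-1))]
    exact congrArg (Ygen n ℓ ζ (-1) + ·) (neg_smul τ (Top n ℓ ζ c)).symm
  have hcomm : ((-τ) • Top n ℓ ζ c) * Ygen n ℓ ζ (-1) =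
      ζ • (Ygen n ℓ ζ (-1) * ((-τ) • Top n ℓ ζ c)) := by
    rw [smul_mul_assoc, mul_smul_comm, smul_comm, Top_gelt_neg_one_mul_Ygen h1 hn]
  rw [map_pow, hx, add_pow_eq_pow_add_pow_of_mul_eq_smul_mul (R := A n ℓ) hζ (by omega)
      (isUnit_Ygen h1 (-1)) hcomm, smul_pow, Top_pow h1,
    sigmaExp_gelt_neg_one_neg_single_zero hn, zp_neg_natCast_pow_sum_range hζ, nsmul_char_mk,
    Yinv, Top_pow_of_snd_eq_zero h1 rfl, nsmul_char_mk, smul_smul,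
    neg_pow_mul_neg_one_pow hn (by omega)]
  exact (congrArg (Ygen n ℓ ζ (-1) ^ ℓ + ·)
    (neg_smul _ (Top n ℓ ζ (ℓ • -Pi.single 0 1, 0)))).trans (sub_eq_add_neg _ _).symm

open TGHA in
/-- One has `Θ(x_n^ℓ) = y_n^ℓ - (-1)^{n(ℓ-1)} τ_n^ℓ y₁^{-ℓ}`
(with `τ_n = ζ t_n/(ζ-1)`; the paper's index `n` is `-1 : Fin n`, i.e. `n - 1` here). -/
theorem statement6 (n ℓ : ℕ) [NeZero n] (hn : 3 ≤ n) (hℓ : 2 ≤ ℓ)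
    (ζ : ℂ) (hζ : IsPrimitiveRoot ζ ℓ) (t : Fin n → ℂ)
    (Θ : H n ℓ ζ t →ₐ[ℂ] A n ℓ)
    (hΘx : ∀ i : Fin n,
      Θ (xx n ℓ ζ t i) =
        Ygen n ℓ ζ i -
          (ζ * t i / (ζ - 1)) • (Yinv n ℓ ζ (i + 1) * Uy n ℓ ζ (gelt n ℓ i)))
    (hΘg : ∀ i : Fin n, Θ (ug n ℓ ζ t (gelt n ℓ i)) = Uy n ℓ ζ (gelt n ℓ i)) :
    Θ (xx n ℓ ζ t (-1) ^ ℓ) =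
      Ygen n ℓ ζ (-1) ^ ℓ -
        ((-1 : ℂ) ^ (n * (ℓ - 1)) * (ζ * t (-1) / (ζ - 1)) ^ ℓ) • Yinv n ℓ ζ 0 ^ ℓ :=
  statement6_general n ℓ hn hℓ ζ hζ t Θ hΘx
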